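/- Any weak φ-quasicontraction of a nonempty compact metric space has a unique fixed point, and the sequence of iterates at any point converges to this fixed point. -/
import Mathlib


open Metric Set Function Filter Topology

def IsComparisonFn (φ : ℝ → ℝ) : Prop :=
  MonotoneOn φ (Set.Ici 0) ∧ UpperSemicontinuousOn φ (Set.Ici 0) ∧
    (∀ t, 0 ≤ t → 0 ≤ φ t) ∧ φ 0 = 0 ∧ ∀ t, 0 < t → φ t < t

def orbitOf {X : Type*} (T : X → X) (x : X) : Set X :=
  Set.range fun n : ℕ => T^[n] x

def dorbitOf {X : Type*} (T : X → X) (x y : X) : Set X :=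
  orbitOf T x ∪ orbitOf T y

def IsWeakQuasicontraction {X : Type*} [MetricSpace X] (φ : ℝ → ℝ) (T : X → X) : Prop :=
  (∀ x : X, Bornology.IsBounded (orbitOf T x)) ∧
    ∀ x y : X, dist (T x) (T y) ≤ φ (Metric.diam (dorbitOf T x y))

def IsStrongQuasicontraction {X : Type*} [MetricSpace X] (φ : ℝ → ℝ) (T : X → X) : Prop :=
  ∀ x y : X, dist (T x) (T y) ≤ φ (Metric.diam {x, y, T x, T y})

set_option linter.unusedSectionVars false

section Aux

variable {X : Type*} [MetricSpace X] (T : X → X)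

lemma mem_orbitOf (x : X) (n : ℕ) : T^[n] x ∈ orbitOf T x := ⟨n, rfl⟩

lemma self_mem_orbitOf (x : X) : x ∈ orbitOf T x := ⟨0, rfl⟩

lemma orbitOf_iterate_subset (x : X) (k : ℕ) : orbitOf T (T^[k] x) ⊆ orbitOf T x := by
  rintro _ ⟨n, rfl⟩
  exact ⟨n + k, by simpa using Function.iterate_add_apply T n k x⟩

lemma dorbitOf_self (x : X) : dorbitOf T x x = orbitOf T x := Set.union_self _

lemma orbitOf_subset_dorbit_of_mem {x y u : X} (hu : u ∈ dorbitOf T x y) :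
    orbitOf T u ⊆ dorbitOf T x y := by
  rcases hu with ⟨k, rfl⟩ | ⟨k, rfl⟩
  · exact fun p hp => Or.inl (orbitOf_iterate_subset T x k hp)
  · exact fun p hp => Or.inr (orbitOf_iterate_subset T y k hp)

variable {φ : ℝ → ℝ}

lemma dorbit_bounded (hT : IsWeakQuasicontraction φ T) (x y : X) :
    Bornology.IsBounded (dorbitOf T x y) := (hT.1 x).union (hT.1 y)

lemma key_step (hφ : IsComparisonFn φ) (hT : IsWeakQuasicontraction φ T) (x y : X) :
    Metric.diam (dorbitOf T (T x) (T y)) ≤ φ (Metric.diam (dorbitOf T x y)) := by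
  obtain ⟨hmono, -, hnn, -, -⟩ := hφ
  apply Metric.diam_le_of_forall_dist_le (hnn _ Metric.diam_nonneg)
  intro p hp q hq
  have hrep : ∀ r ∈ dorbitOf T (T x) (T y), ∃ u ∈ dorbitOf T x y, r = T u := by
    rintro _ (⟨m, rfl⟩ | ⟨m, rfl⟩)
    · exact ⟨T^[m] x, Or.inl ⟨m, rfl⟩, by
        show T^[m] (T x) = T (T^[m] x)
        rw [← Function.iterate_succ_apply, Function.iterate_succ_apply']⟩
    · exact ⟨T^[m] y, Or.inr ⟨m, rfl⟩, by
        show T^[m] (T y) = T (T^[m] y)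
        rw [← Function.iterate_succ_apply, Function.iterate_succ_apply']⟩
  obtain ⟨u, hu, rfl⟩ := hrep p hp
  obtain ⟨v, hv, rfl⟩ := hrep q hq
  refine (hT.2 u v).trans (hmono Metric.diam_nonneg Metric.diam_nonneg ?_)
  refine Metric.diam_mono ?_ (dorbit_bounded T hT x y)
  exact Set.union_subset (orbitOf_subset_dorbit_of_mem T hu) (orbitOf_subset_dorbit_of_mem T hv)

lemma iterate_nonneg (hφ : IsComparisonFn φ) {t : ℝ} (ht : 0 ≤ t) (n : ℕ) : 0 ≤ φ^[n] t := by
  induction n with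
  | zero => exact ht
  | succ n ih => rw [Function.iterate_succ_apply']; exact hφ.2.2.1 _ ih

lemma key_iter (hφ : IsComparisonFn φ) (hT : IsWeakQuasicontraction φ T) (x y : X) (n : ℕ) :
    Metric.diam (dorbitOf T (T^[n] x) (T^[n] y)) ≤ φ^[n] (Metric.diam (dorbitOf T x y)) := by
  induction n with
  | zero => simp
  | succ n ih =>
    rw [Function.iterate_succ_apply' T n x, Function.iterate_succ_apply' T n y,
      Function.iterate_succ_apply' φ n]
    exact (key_step T hφ hT _ _).trans
      (hφ.1 Metric.diam_nonneg (iterate_nonneg hφ Metric.diam_nonneg n) ih)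

lemma comparison_iter_tendsto (hφ : IsComparisonFn φ) {t : ℝ} (ht : 0 ≤ t) :
    Tendsto (fun n => φ^[n] t) atTop (nhds 0) := by
  obtain ⟨hmono, husc, hnn, h0, hlt⟩ := hφ
  set a : ℕ → ℝ := fun n => φ^[n] t with ha
  have ha0 : ∀ n, 0 ≤ a n := iterate_nonneg ⟨hmono, husc, hnn, h0, hlt⟩ ht
  have hstep : ∀ n, a (n + 1) = φ (a n) := fun n => Function.iterate_succ_apply' φ n t
  have hanti : Antitone a := by
    apply antitone_nat_of_succ_le
    intro n
    rcases eq_or_lt_of_le (ha0 n) with h | h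
    · rw [hstep, ← h, h0]
    · exact (hstep n).le.trans (hlt _ h).le
  have hbdd : BddBelow (Set.range a) := ⟨0, by rintro _ ⟨n, rfl⟩; exact ha0 n⟩
  have hL : Tendsto a atTop (nhds (⨅ n, a n)) := tendsto_atTop_ciInf hanti hbdd
  set L := ⨅ n, a n with hLdef
  have hL0 : 0 ≤ L := le_ciInf ha0
  have hLle : ∀ n, L ≤ a n := fun n => ciInf_le hbdd n
  rcases eq_or_lt_of_le hL0 with h | h
  · rwa [← h] at hL
  · exfalso
    have hφL : φ L < L := hlt L h
    have husL := husc L (Set.mem_Ici.mpr hL0) L hφL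
    have htend : Tendsto a atTop (nhdsWithin L (Set.Ici 0)) := by
      rw [tendsto_nhdsWithin_iff]
      exact ⟨hL, Filter.Eventually.of_forall fun n => ha0 n⟩
    have := (htend.eventually husL).exists
    obtain ⟨n, hn⟩ := this
    exact absurd (hstep n ▸ hn) (not_lt.mpr (hLle (n + 1)))

end Aux

theorem weakQuasicontraction_fixedPoint_of_compact {X : Type*} [MetricSpace X]
    [CompactSpace X] [Nonempty X] (φ : ℝ → ℝ) (T : X → X)
    (hφ : IsComparisonFn φ) (hT : IsWeakQuasicontraction φ T) :
    ∃ x₀ : X, T x₀ = x₀ ∧ (∀ y : X, T y = y → y = x₀) ∧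
      ∀ x : X, Filter.Tendsto (fun n : ℕ => T^[n] x) Filter.atTop (nhds x₀) := by
  obtain ⟨hmono, husc, hnn, h0, hlt⟩ := hφ
  have hφ' : IsComparisonFn φ := ⟨hmono, husc, hnn, h0, hlt⟩
  -- every iterate sequence is Cauchy
  have hcauchy : ∀ x : X, CauchySeq fun n : ℕ => T^[n] x := by
    intro x
    apply cauchySeq_of_le_tendsto_0 (fun n => φ^[n] (Metric.diam (dorbitOf T x x)))
    · intro n m N hn hm
      have h1 : T^[n] x ∈ orbitOf T (T^[N] x) := by
        refine ⟨n - N, ?_⟩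
        show T^[n - N] (T^[N] x) = T^[n] x
        rw [← Function.iterate_add_apply, Nat.sub_add_cancel hn]
      have h2 : T^[m] x ∈ orbitOf T (T^[N] x) := by
        refine ⟨m - N, ?_⟩
        show T^[m - N] (T^[N] x) = T^[m] x
        rw [← Function.iterate_add_apply, Nat.sub_add_cancel hm]
      have hb : Bornology.IsBounded (dorbitOf T (T^[N] x) (T^[N] x)) :=
        dorbit_bounded T hT _ _
      calc dist (T^[n] x) (T^[m] x)
          ≤ Metric.diam (dorbitOf T (T^[N] x) (T^[N] x)) :=
            Metric.dist_le_diam_of_mem hb (Or.inl h1) (Or.inl h2)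
        _ ≤ φ^[N] (Metric.diam (dorbitOf T x x)) := key_iter T hφ' hT x x N
    · exact comparison_iter_tendsto hφ' Metric.diam_nonneg
  -- limits of iterate sequences
  have hlimex : ∀ x : X, ∃ l : X, Tendsto (fun n : ℕ => T^[n] x) atTop (nhds l) :=
    fun x => cauchySeq_tendsto_of_complete (hcauchy x)
  obtain ⟨x₀, hx₀⟩ := hlimex (Classical.arbitrary X)
  -- all iterate sequences converge to x₀
  have hdist0 : ∀ x y : X,
      Tendsto (fun n : ℕ => dist (T^[n] x) (T^[n] y)) atTop (nhds 0) := by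
    intro x y
    have hle : ∀ n : ℕ, dist (T^[n] x) (T^[n] y) ≤ φ^[n] (Metric.diam (dorbitOf T x y)) := by
      intro n
      have hb := dorbit_bounded T hT (T^[n] x) (T^[n] y)
      exact (Metric.dist_le_diam_of_mem hb (Or.inl (self_mem_orbitOf T _))
        (Or.inr (self_mem_orbitOf T _))).trans (key_iter T hφ' hT x y n)
    exact squeeze_zero (fun n => dist_nonneg) hle
      (comparison_iter_tendsto hφ' Metric.diam_nonneg)
  have hconv : ∀ x : X, Tendsto (fun n : ℕ => T^[n] x) atTop (nhds x₀) := by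
    intro x
    obtain ⟨l, hl⟩ := hlimex x
    have : Tendsto (fun n : ℕ => dist (T^[n] x) (T^[n] (Classical.arbitrary X)))
        atTop (nhds (dist l x₀)) := hl.dist hx₀
    have hd : dist l x₀ = 0 := tendsto_nhds_unique this (hdist0 _ _)
    rwa [← dist_eq_zero.mp hd]
  -- x₀'s orbit has zero diameter
  have hx₀conv : Tendsto (fun n : ℕ => T^[n] x₀) atTop (nhds x₀) := hconv x₀
  set D := Metric.diam (orbitOf T x₀) with hD
  have hDnn : 0 ≤ D := Metric.diam_nonneg
  have hpos : ∀ i j : ℕ, dist (T^[i + 1] x₀) (T^[j + 1] x₀) ≤ φ D := by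
    intro i j
    rw [Function.iterate_succ_apply' T i, Function.iterate_succ_apply' T j]
    refine (hT.2 _ _).trans (hmono Metric.diam_nonneg hDnn ?_)
    refine Metric.diam_mono ?_ (hT.1 x₀)
    exact Set.union_subset (orbitOf_iterate_subset T x₀ i) (orbitOf_iterate_subset T x₀ j)
  have hDle : D ≤ φ D := by
    refine le_of_forall_pos_le_add ?_
    intro ε hε
    refine Metric.diam_le_of_forall_dist_le
      (by linarith [hnn D hDnn]) ?_
    rintro _ ⟨i, rfl⟩ _ ⟨j, rfl⟩
    have hmix : ∀ j : ℕ, dist x₀ (T^[j + 1] x₀) ≤ φ D + ε := by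
      intro j
      obtain ⟨n, hn⟩ := ((hx₀conv.eventually (Metric.ball_mem_nhds x₀ hε)).and
        (eventually_ge_atTop 1)).exists
      have h1 : dist x₀ (T^[n] x₀) < ε := by
        rw [dist_comm]; exact hn.1
      calc dist x₀ (T^[j + 1] x₀) ≤ dist x₀ (T^[n] x₀) + dist (T^[n] x₀) (T^[j + 1] x₀) :=
            dist_triangle _ _ _
        _ ≤ ε + φ D := by
            have : dist (T^[n] x₀) (T^[j + 1] x₀) ≤ φ D := by
              have hn1 : n - 1 + 1 = n := Nat.sub_add_cancel hn.2
              calc dist (T^[n] x₀) (T^[j + 1] x₀)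
                  = dist (T^[n - 1 + 1] x₀) (T^[j + 1] x₀) := by rw [hn1]
                _ ≤ φ D := hpos _ _
            linarith [h1.le]
        _ = φ D + ε := by ring
    match i, j with
    | 0, 0 =>
      simp only [Function.iterate_zero_apply, dist_self]
      linarith [hnn D hDnn]
    | 0, j + 1 => exact hmix j
    | i + 1, 0 => rw [dist_comm]; simpa using hmix i
    | i + 1, j + 1 => linarith [hpos i j, hε.le]
  have hD0 : D = 0 := by
    by_contra h
    have hDpos : 0 < D := lt_of_le_of_ne hDnn (Ne.symm h)
    exact absurd hDle (not_le.mpr (hlt D hDpos))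
  have hfix : T x₀ = x₀ := by
    have h1 : T x₀ ∈ orbitOf T x₀ := ⟨1, by simp⟩
    have := Metric.dist_le_diam_of_mem (hT.1 x₀) h1 (self_mem_orbitOf T x₀)
    rw [← hD, hD0] at this
    exact dist_eq_zero.mp (le_antisymm this dist_nonneg)
  refine ⟨x₀, hfix, ?_, hconv⟩
  intro y hy
  have : Tendsto (fun n : ℕ => T^[n] y) atTop (nhds y) := by
    simp only [Function.iterate_fixed hy]
    exact tendsto_const_nhds
  exact tendsto_nhds_unique this (hconv y)
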